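/- For the potential V with V(r)=−1 for r∈[1,√2] and V(r)=0 for r>√2, the energy per point of ℤ² converges: lim_{R→∞} E[V](ℤ² ∩ B_R)/#(ℤ² ∩ B_R) = −4. -/

import Mathlib

open scoped Classical

/-- The potential V with V(r) = −1 for r ∈ [1,√2] and V(r) = 0 otherwise (in particular
for r > √2). -/
noncomputable def V5 (r : ℝ) : ℝ := if 1 ≤ r ∧ r ≤ Real.sqrt 2 then -1 else 0

/-- The embedding of ℤ² into the Euclidean plane. -/
noncomputable def latticePt (z : ℤ × ℤ) : EuclideanSpace ℝ (Fin 2) :=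
  (WithLp.equiv 2 (Fin 2 → ℝ)).symm ![(z.1 : ℝ), (z.2 : ℝ)]

/-- The finite set ℤ² ∩ B_R (open ball of radius R centered at the origin). -/
noncomputable def ballPts (R : ℝ) : Finset (ℤ × ℤ) :=
  (Finset.Icc (-(⌈R⌉ + 1), -(⌈R⌉ + 1)) (⌈R⌉ + 1, ⌈R⌉ + 1)).filter
    (fun z => Real.sqrt ((z.1 : ℝ) ^ 2 + (z.2 : ℝ) ^ 2) < R)

/-! The potential only sees the eight lattice vectors `(±1, 0)`, `(0, ±1)`, `(±1, ±1)`, so the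
energy of a finite `X ⊆ ℤ²` is minus half the number of ordered pairs of points of `X` differing
by one of them. A point of `X = ℤ² ∩ B_R` has at most eight such partners, and exactly eight if
it lies in `B_{R-2}`; hence the energy per point lies between `-4` and
`-4 #(ℤ² ∩ B_{R-2}) / #(ℤ² ∩ B_R)`.
Comparing the disjoint unit squares at the lattice points with disks gives
`π (R - √2)² ≤ #(ℤ² ∩ B_R) ≤ π (R + √2)²`, so that ratio tends to `1`. -/

open Finset Filter Function Topology MeasureTheory
open scoped Real

lemma latticePt_apply_zero (z : ℤ × ℤ) : latticePt z 0 = z.1 := rfl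

lemma latticePt_apply_one (z : ℤ × ℤ) : latticePt z 1 = z.2 := rfl

lemma norm_latticePt (z : ℤ × ℤ) : ‖latticePt z‖ = √((z.1 : ℝ) ^ 2 + (z.2 : ℝ) ^ 2) := by
  simp [EuclideanSpace.norm_eq, Fin.sum_univ_two, latticePt_apply_zero, latticePt_apply_one]

lemma latticePt_sub (p q : ℤ × ℤ) : latticePt (p - q) = latticePt p - latticePt q := by
  ext i
  fin_cases i <;> simp [latticePt_apply_zero, latticePt_apply_one]

lemma dist_latticePt (p q : ℤ × ℤ) :
    dist (latticePt p) (latticePt q) = ‖latticePt (p - q)‖ := by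
  rw [dist_eq_norm, latticePt_sub]

lemma mem_ballPts {R : ℝ} {p : ℤ × ℤ} : p ∈ ballPts R ↔ ‖latticePt p‖ < R := by
  rw [ballPts, mem_filter, ← norm_latticePt, and_iff_right_iff_imp]
  intro h
  have hceil : R < ⌈R⌉ + 1 := (Int.le_ceil R).trans_lt (lt_add_one _)
  have h1 := abs_lt.mp (((PiLp.norm_apply_le (latticePt p) 0).trans_lt h).trans hceil)
  have h2 := abs_lt.mp (((PiLp.norm_apply_le (latticePt p) 1).trans_lt h).trans hceil)
  simp only [latticePt_apply_zero, latticePt_apply_one] at h1 h2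
  have h1' : -(⌈R⌉ + 1) < p.1 ∧ p.1 < ⌈R⌉ + 1 := by exact_mod_cast h1
  have h2' : -(⌈R⌉ + 1) < p.2 ∧ p.2 < ⌈R⌉ + 1 := by exact_mod_cast h2
  simp only [mem_Icc, Prod.le_def]
  omega

lemma ballPts_mono {R₁ R₂ : ℝ} (h : R₁ ≤ R₂) : ballPts R₁ ⊆ ballPts R₂ :=
  fun _ hp => mem_ballPts.mpr ((mem_ballPts.mp hp).trans_le h)

def neighbourOffsets : Finset (ℤ × ℤ) := (({-1, 0, 1} : Finset ℤ) ×ˢ {-1, 0, 1}).erase 0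

lemma card_neighbourOffsets : #neighbourOffsets = 8 := by decide

lemma abs_le_one_of_sq_le_two {a : ℤ} (h : a ^ 2 ≤ 2) : |a| ≤ 1 := by
  by_contra! ha
  nlinarith [sq_abs a]

lemma mem_neighbourOffsets {d : ℤ × ℤ} :
    d ∈ neighbourOffsets ↔ 1 ≤ d.1 ^ 2 + d.2 ^ 2 ∧ d.1 ^ 2 + d.2 ^ 2 ≤ 2 := by
  obtain ⟨a, b⟩ := d
  simp only [neighbourOffsets, mem_erase, mem_product, mem_insert, mem_singleton, ne_eq,
    Prod.mk_eq_zero]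
  constructor
  · rintro ⟨hne, ha, hb⟩
    rcases ha with rfl | rfl | rfl <;> rcases hb with rfl | rfl | rfl <;> simp_all
  · rintro ⟨h1, h2⟩
    have ha := abs_le.mp (abs_le_one_of_sq_le_two (a := a) (by nlinarith))
    have hb := abs_le.mp (abs_le_one_of_sq_le_two (a := b) (by nlinarith))
    refine ⟨?_, by omega, by omega⟩
    rintro ⟨rfl, rfl⟩
    norm_num at h1

lemma V5_norm_latticePt (d : ℤ × ℤ) :
    V5 ‖latticePt d‖ = if d ∈ neighbourOffsets then -1 else 0 := by
  have hcast : ((d.1 : ℝ) ^ 2 + (d.2 : ℝ) ^ 2) = ((d.1 ^ 2 + d.2 ^ 2 : ℤ) : ℝ) := by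
    push_cast; rfl
  have hmem : (1 ≤ ‖latticePt d‖ ∧ ‖latticePt d‖ ≤ √2) ↔ d ∈ neighbourOffsets := by
    rw [norm_latticePt, hcast, Real.one_le_sqrt, Real.sqrt_le_sqrt_iff (by norm_num),
      mem_neighbourOffsets]
    norm_cast
  simp only [V5, hmem]

lemma norm_latticePt_le_of_mem_neighbourOffsets {d : ℤ × ℤ} (hd : d ∈ neighbourOffsets) :
    ‖latticePt d‖ ≤ √2 := by
  rw [norm_latticePt]
  gcongr
  exact_mod_cast (mem_neighbourOffsets.mp hd).2

lemma card_filter_sub_mem {G : Type*} [AddCommGroup G] [DecidableEq G] (s D : Finset G) (p : G) :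
    #{q ∈ s | p - q ∈ D} = #{d ∈ D | p - d ∈ s} :=
  card_nbij' (p - ·) (p - ·) (fun _ hq => by simpa [and_comm] using hq)
    (fun _ hd => by simpa [and_comm] using hd)
    (fun _ _ => sub_sub_cancel p _) (fun _ _ => sub_sub_cancel p _)

def bondCount (s : Finset (ℤ × ℤ)) : ℕ := ∑ p ∈ s, #{q ∈ s | p - q ∈ neighbourOffsets}

lemma sum_V5_dist_erase (s : Finset (ℤ × ℤ)) (p : ℤ × ℤ) :
    ∑ q ∈ s.erase p, V5 (dist (latticePt p) (latticePt q)) =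
      -#{q ∈ s | p - q ∈ neighbourOffsets} := by
  rw [sum_erase s (by norm_num [V5])]
  simp [dist_latticePt, V5_norm_latticePt, sum_ite]

noncomputable def energy (s : Finset (ℤ × ℤ)) : ℝ :=
  (1 / 2 : ℝ) * ∑ p ∈ s, ∑ q ∈ s.erase p, V5 (dist (latticePt p) (latticePt q))

lemma energy_eq_neg_half_bondCount (s : Finset (ℤ × ℤ)) : energy s = -(bondCount s / 2) := by
  simp only [energy, sum_V5_dist_erase, sum_neg_distrib, bondCount]
  push_cast
  ring

lemma bondCount_le (s : Finset (ℤ × ℤ)) : bondCount s ≤ 8 * #s := by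
  rw [bondCount, mul_comm, ← smul_eq_mul]
  refine sum_le_card_nsmul _ _ _ fun p _ => ?_
  rw [card_filter_sub_mem, ← card_neighbourOffsets]
  exact card_filter_le _ _

lemma le_bondCount {s t : Finset (ℤ × ℤ)} (hts : t ⊆ s)
    (ht : ∀ p ∈ t, ∀ d ∈ neighbourOffsets, p - d ∈ s) : 8 * #t ≤ bondCount s := by
  calc 8 * #t = ∑ p ∈ t, #{q ∈ s | p - q ∈ neighbourOffsets} := by
        rw [sum_congr rfl fun p hp => by rw [card_filter_sub_mem, filter_true_of_mem (ht p hp)],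
          sum_const, card_neighbourOffsets, smul_eq_mul, mul_comm]
    _ ≤ bondCount s := sum_le_sum_of_subset hts

lemma le_bondCount_ballPts (R : ℝ) : 8 * #(ballPts (R - 2)) ≤ bondCount (ballPts R) := by
  refine le_bondCount (ballPts_mono (by linarith)) fun p hp d hd => mem_ballPts.mpr ?_
  calc ‖latticePt (p - d)‖ ≤ ‖latticePt p‖ + ‖latticePt d‖ := by
        rw [latticePt_sub]; exact norm_sub_le _ _
    _ < R := by
        linarith [mem_ballPts.mp hp, norm_latticePt_le_of_mem_neighbourOffsets hd,
          Real.sqrt_two_lt_three_halves]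

def latticeCell (p : ℤ × ℤ) : Set (EuclideanSpace ℝ (Fin 2)) :=
  {x | ⌊x 0⌋ = p.1 ∧ ⌊x 1⌋ = p.2}

lemma latticeCell_eq_preimage_pi (p : ℤ × ℤ) :
    latticeCell p =
      WithLp.ofLp ⁻¹' Set.univ.pi fun i => Set.Ico (latticePt p i) (latticePt p i + 1) := by
  ext x
  simp [latticeCell, Int.floor_eq_iff, Fin.forall_fin_two, latticePt_apply_zero,
    latticePt_apply_one]

lemma measurableSet_latticeCell (p : ℤ × ℤ) : MeasurableSet (latticeCell p) := by
  rw [latticeCell_eq_preimage_pi]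
  exact (MeasurableSet.univ_pi fun _ => measurableSet_Ico).preimage (by fun_prop)

lemma volume_latticeCell (p : ℤ × ℤ) : volume (latticeCell p) = 1 := by
  rw [latticeCell_eq_preimage_pi, (PiLp.volume_preserving_ofLp (Fin 2)).measure_preimage
    (MeasurableSet.univ_pi fun _ => measurableSet_Ico).nullMeasurableSet, Real.volume_pi_Ico]
  simp

lemma pairwise_disjoint_latticeCell : Pairwise (Disjoint on latticeCell) := by
  intro p q hpq
  refine Set.disjoint_left.mpr fun x hp hq => hpq ?_
  exact Prod.ext (hp.1.symm.trans hq.1) (hp.2.symm.trans hq.2)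

lemma floor_mem_latticeCell (x : EuclideanSpace ℝ (Fin 2)) :
    x ∈ latticeCell (⌊x 0⌋, ⌊x 1⌋) :=
  ⟨rfl, rfl⟩

lemma dist_latticePt_lt_of_mem_latticeCell {x : EuclideanSpace ℝ (Fin 2)} {p : ℤ × ℤ}
    (hx : x ∈ latticeCell p) : dist x (latticePt p) < √2 := by
  rw [latticeCell_eq_preimage_pi] at hx
  simp only [Set.mem_preimage, Set.mem_univ_pi, Set.mem_Ico] at hx
  rw [EuclideanSpace.dist_eq, Fin.sum_univ_two]
  gcongr
  have hcoord : ∀ i, dist (x i) (latticePt p i) ^ 2 < 1 := fun i => by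
    obtain ⟨h, h'⟩ := hx i
    rw [Real.dist_eq, sq_abs]
    nlinarith
  linarith [hcoord 0, hcoord 1]

lemma volume_biUnion_latticeCell (s : Finset (ℤ × ℤ)) :
    volume (⋃ p ∈ s, latticeCell p) = #s := by
  rw [measure_biUnion_finset (pairwise_disjoint_latticeCell.set_pairwise _)
    fun p _ => measurableSet_latticeCell p]
  simp [volume_latticeCell]

lemma card_ballPts_le {R : ℝ} (hR : 0 ≤ R) : (#(ballPts R) : ℝ) ≤ π * (R + √2) ^ 2 := by
  have hsub : ⋃ p ∈ ballPts R, latticeCell p ⊆ Metric.ball 0 (R + √2) := by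
    simp only [Set.iUnion_subset_iff]
    intro p hp x hx
    rw [mem_ball_zero_iff]
    calc ‖x‖ ≤ ‖latticePt p‖ + dist x (latticePt p) := by
          rw [dist_eq_norm]; exact norm_le_norm_add_norm_sub' _ _
      _ < R + √2 := add_lt_add (mem_ballPts.mp hp) (dist_latticePt_lt_of_mem_latticeCell hx)
  have hvol := measure_mono (μ := volume) hsub
  rw [volume_biUnion_latticeCell, EuclideanSpace.volume_ball_fin_two,
    ← ENNReal.ofReal_pow (by positivity), ← ENNReal.ofReal_mul (by positivity),
    ← ENNReal.ofReal_natCast, ENNReal.ofReal_le_ofReal_iff (by positivity)] at hvol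
  linarith

lemma le_card_ballPts {R : ℝ} (hR : √2 ≤ R) : π * (R - √2) ^ 2 ≤ #(ballPts R) := by
  have hsub : Metric.ball 0 (R - √2) ⊆ ⋃ p ∈ ballPts R, latticeCell p := by
    intro x hx
    rw [mem_ball_zero_iff] at hx
    have hcell := floor_mem_latticeCell x
    refine Set.mem_biUnion (mem_ballPts.mpr ?_) hcell
    calc ‖latticePt (⌊x 0⌋, ⌊x 1⌋)‖
        ≤ ‖x‖ + dist x (latticePt (⌊x 0⌋, ⌊x 1⌋)) := by
          rw [dist_comm, dist_eq_norm]; exact norm_le_norm_add_norm_sub' _ _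
      _ < R - √2 + √2 := add_lt_add hx (dist_latticePt_lt_of_mem_latticeCell hcell)
      _ = R := by ring
  have hvol := measure_mono (μ := volume) hsub
  rw [volume_biUnion_latticeCell, EuclideanSpace.volume_ball_fin_two,
    ← ENNReal.ofReal_pow (by linarith), ← ENNReal.ofReal_mul (by positivity),
    ← ENNReal.ofReal_natCast, ENNReal.ofReal_le_ofReal_iff (by positivity)] at hvol
  linarith

lemma tendsto_sub_div_add_atTop (a b : ℝ) :
    Tendsto (fun R : ℝ => (R - a) / (R + b)) atTop (𝓝 1) := by
  have h : Tendsto (fun R : ℝ => 1 - (a + b) / (R + b)) atTop (𝓝 (1 - 0)) :=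
    tendsto_const_nhds.sub <| tendsto_const_nhds.div_atTop <|
      tendsto_atTop_add_const_right _ b tendsto_id
  rw [sub_zero] at h
  refine h.congr' ?_
  filter_upwards [eventually_gt_atTop (-b)] with R hR
  have : R + b ≠ 0 := by linarith
  field_simp
  ring

lemma tendsto_card_ballPts_sub_two_div :
    Tendsto (fun R => (#(ballPts (R - 2)) : ℝ) / #(ballPts R)) atTop (𝓝 1) := by
  have hlower : Tendsto (fun R : ℝ => ((R - (2 + √2)) / (R + √2)) ^ 2) atTop (𝓝 1) := by
    simpa using (tendsto_sub_div_add_atTop (2 + √2) √2).pow 2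
  refine tendsto_of_tendsto_of_tendsto_of_le_of_le' hlower tendsto_const_nhds ?_ ?_
  · filter_upwards [eventually_gt_atTop (2 + √2)] with R hR
    have hR0 : 0 < R := by linarith [Real.sqrt_nonneg 2]
    have hinner := le_card_ballPts (R := R - 2) (by linarith)
    have houter := card_ballPts_le hR0.le
    have hcard : (0 : ℝ) < #(ballPts R) :=
      (mul_pos Real.pi_pos (pow_pos (by linarith) 2)).trans_le (le_card_ballPts (by linarith))
    calc ((R - (2 + √2)) / (R + √2)) ^ 2
        = (π * (R - 2 - √2) ^ 2) / (π * (R + √2) ^ 2) := by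
          rw [mul_div_mul_left _ _ Real.pi_ne_zero, div_pow]; ring
      _ ≤ _ := div_le_div₀ (by positivity) hinner hcard houter
  · refine Eventually.of_forall fun R => div_le_one_of_le₀ ?_ (by positivity)
    exact_mod_cast card_le_card (ballPts_mono (by linarith))

lemma card_ballPts_pos {R : ℝ} (hR : 0 < R) : (0 : ℝ) < #(ballPts R) := by
  have h0 : (0 : ℤ × ℤ) ∈ ballPts R := mem_ballPts.mpr (by simpa [norm_latticePt] using hR)
  exact_mod_cast card_pos.mpr ⟨0, h0⟩

lemma energy_div_card_ballPts_mem_Icc {R : ℝ} (hR : 0 < R) :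
    energy (ballPts R) / #(ballPts R) ∈
      Set.Icc (-4) (-4 * ((#(ballPts (R - 2)) : ℝ) / #(ballPts R))) := by
  have hupper : (bondCount (ballPts R) : ℝ) ≤ 8 * #(ballPts R) := by
    exact_mod_cast bondCount_le _
  have hlower : 8 * (#(ballPts (R - 2)) : ℝ) ≤ bondCount (ballPts R) := by
    exact_mod_cast le_bondCount_ballPts R
  rw [energy_eq_neg_half_bondCount, Set.mem_Icc, le_div_iff₀ (card_ballPts_pos hR), mul_div_assoc',
    div_le_div_iff_of_pos_right (card_ballPts_pos hR)]
  constructor <;> linarith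

/-- The energy per point of ℤ² ∩ B_R converges to −4 as R → ∞. -/
theorem lattice_energy_per_point_tendsto :
    Filter.Tendsto
      (fun R : ℝ =>
        ((1 / 2 : ℝ) *
            ∑ p ∈ ballPts R, ∑ q ∈ (ballPts R).erase p, V5 (dist (latticePt p) (latticePt q))) /
          ((ballPts R).card : ℝ))
      Filter.atTop (nhds (-4)) := by
  change Tendsto (fun R => energy (ballPts R) / #(ballPts R)) atTop (𝓝 (-4))
  have hupper : Tendsto (fun R => -4 * ((#(ballPts (R - 2)) : ℝ) / #(ballPts R))) atTop
      (𝓝 (-4)) := by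
    simpa using tendsto_card_ballPts_sub_two_div.const_mul (-4)
  refine tendsto_of_tendsto_of_tendsto_of_le_of_le' tendsto_const_nhds hupper ?_ ?_ <;>
    filter_upwards [eventually_gt_atTop 0] with R hR
  exacts [(energy_div_card_ballPts_mem_Icc hR).1, (energy_div_card_ballPts_mem_Icc hR).2]
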